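/- arXiv:1512.00820 — 2 statements merged into one kernel-verified Lean document; each statement's English description precedes it below -/
import Mathlib

section
/- Suppose x_n, x : [0,1] → ℝ are bounded Riemann-integrable functions, x has at most countably many discontinuities, and for every subinterval [t_1, t_2] whose endpoints are continuity points of x one has sup_{[t_1,t_2]} x_n → sup_{[t_1,t_2]} x and inf_{[t_1,t_2]} x_n → inf_{[t_1,t_2]} x. Then ∫_0^1 x_n(t) dt → ∫_0^1 x(t) dt. -/
/-!
Take partitions whose points avoid the countably many discontinuities of `x` and whose mesh
tends to `0`. On each piece `∫ xₙ` is bounded by length times supremum, so by the hypothesis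
`limsup ∫ xₙ` is at most the upper Darboux sum of `x` plus the two short end pieces. Since `x`
is continuous almost everywhere, the step functions behind these upper sums converge to `x`
a.e., and dominated convergence lets the upper sums tend to `∫ x`. Replacing `x` by `-x` turns
infima into suprema and gives the lower bound.
-/

open Filter Set MeasureTheory Topology

section Darboux

variable {f : ℝ → ℝ} {q : ℕ → ℝ} {m : ℕ} {a b C t : ℝ}

noncomputable def upperDarbouxSum (f : ℝ → ℝ) (q : ℕ → ℝ) (m : ℕ) : ℝ :=
  ∑ i ∈ Finset.range m, (q (i + 1) - q i) * sSup (f '' Icc (q i) (q (i + 1)))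

noncomputable def upperDarbouxStep (f : ℝ → ℝ) (q : ℕ → ℝ) (m : ℕ) (t : ℝ) : ℝ :=
  ∑ i ∈ Finset.range m,
    (Ico (q i) (q (i + 1))).indicator (fun _ => sSup (f '' Icc (q i) (q (i + 1)))) t

lemma exists_lt_mem_Ico_succ {α : Type*} [LinearOrder α] {q : ℕ → α} {t : α} :
    ∀ {m : ℕ}, q 0 ≤ t → t < q m → ∃ i < m, t ∈ Ico (q i) (q (i + 1))
  | 0, h0, hm => absurd hm h0.not_gt
  | m + 1, h0, hm => by
    rcases lt_or_ge t (q m) with h | h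
    · obtain ⟨i, hi, hti⟩ := exists_lt_mem_Ico_succ h0 h
      exact ⟨i, hi.trans m.lt_succ_self, hti⟩
    · exact ⟨m, m.lt_succ_self, h, hm⟩

lemma abs_sSup_image_le {s : Set ℝ} (hs : s.Nonempty) (hf : ∀ y ∈ s, |f y| ≤ C) :
    |sSup (f '' s)| ≤ C := by
  have hbdd : BddAbove (f '' s) := ⟨C, forall_mem_image.2 fun y hy => (abs_le.1 (hf y hy)).2⟩
  obtain ⟨y, hy⟩ := hs
  exact abs_le.2 ⟨(abs_le.1 (hf y hy)).1.trans (le_csSup hbdd (mem_image_of_mem f hy)),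
    csSup_le ⟨f y, mem_image_of_mem f hy⟩ (forall_mem_image.2 fun y hy => (abs_le.1 (hf y hy)).2)⟩

lemma abs_sSup_image_Icc_sub_le {u v ε : ℝ} (ht : t ∈ Icc u v)
    (hf : ∀ s ∈ Icc u v, |f s - f t| ≤ ε) : |sSup (f '' Icc u v) - f t| ≤ ε := by
  have hle : ∀ y ∈ f '' Icc u v, y ≤ f t + ε :=
    forall_mem_image.2 fun s hs => by linarith [(abs_le.1 (hf s hs)).2]
  have hge : f t ≤ sSup (f '' Icc u v) := le_csSup ⟨_, hle⟩ (mem_image_of_mem f ht)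
  have hle' : sSup (f '' Icc u v) ≤ f t + ε := csSup_le ⟨f t, mem_image_of_mem f ht⟩ hle
  rw [abs_le]
  constructor <;> linarith

lemma integral_le_upperDarbouxSum (hq : Monotone q) (hbdd : BddAbove (f '' Icc (q 0) (q m)))
    (hfi : IntervalIntegrable f volume (q 0) (q m)) :
    ∫ t in q 0..q m, f t ≤ upperDarbouxSum f q m := by
  have hsub : ∀ i < m, Icc (q i) (q (i + 1)) ⊆ Icc (q 0) (q m) := fun i hi =>
    Icc_subset_Icc (hq i.zero_le) (hq hi)
  have hint : ∀ i < m, IntervalIntegrable f volume (q i) (q (i + 1)) := fun i hi =>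
    hfi.mono_set <| by
      simpa only [uIcc_of_le (hq i.le_succ), uIcc_of_le (hq m.zero_le)] using hsub i hi
  rw [← intervalIntegral.sum_integral_adjacent_intervals hint, upperDarbouxSum]
  refine Finset.sum_le_sum fun i hi => ?_
  have hi := Finset.mem_range.1 hi
  calc ∫ t in q i..q (i + 1), f t
      ≤ ∫ _ in q i..q (i + 1), sSup (f '' Icc (q i) (q (i + 1))) :=
        intervalIntegral.integral_mono_on (hq i.le_succ) (hint i hi) intervalIntegrable_const
          fun t ht => le_csSup (hbdd.mono (image_mono (hsub i hi))) (mem_image_of_mem f ht)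
    _ = _ := by rw [intervalIntegral.integral_const, smul_eq_mul]

lemma integral_le_add_upperDarbouxSum (hq : Monotone q) (ha : a ≤ q 0) (hb : q m ≤ b)
    (hf : ∀ t ∈ Icc a b, |f t| ≤ C) (hfi : IntervalIntegrable f volume a b) :
    ∫ t in a..b, f t ≤ C * (q 0 - a) + upperDarbouxSum f q m + C * (b - q m) := by
  have hq0m : q 0 ≤ q m := hq m.zero_le
  have hint : ∀ {u v}, u ∈ Icc a b → v ∈ Icc a b → IntervalIntegrable f volume u v :=
    fun hu hv => hfi.mono_set (uIcc_subset_uIcc (Icc_subset_uIcc hu) (Icc_subset_uIcc hv))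
  have hend : ∀ {u v}, a ≤ u → u ≤ v → v ≤ b → ∫ t in u..v, f t ≤ C * (v - u) := by
    intro u v hau huv hvb
    have h := intervalIntegral.norm_integral_le_of_norm_le_const (f := f) (C := C) fun t ht => by
      rw [uIoc_of_le huv] at ht
      exact hf t ⟨hau.trans ht.1.le, ht.2.trans hvb⟩
    rw [abs_of_nonneg (sub_nonneg.2 huv)] at h
    exact (le_abs_self _).trans h
  have ha_mem : a ∈ Icc a b := ⟨le_rfl, ha.trans (hq0m.trans hb)⟩
  have hb_mem : b ∈ Icc a b := ⟨ha_mem.2, le_rfl⟩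
  have h0_mem : q 0 ∈ Icc a b := ⟨ha, hq0m.trans hb⟩
  have hm_mem : q m ∈ Icc a b := ⟨ha.trans hq0m, hb⟩
  have hmid := integral_le_upperDarbouxSum hq
    ⟨C, forall_mem_image.2 fun t ht => (abs_le.1 (hf t ⟨ha.trans ht.1, ht.2.trans hb⟩)).2⟩
    (hint h0_mem hm_mem)
  rw [← intervalIntegral.integral_add_adjacent_intervals (hint ha_mem h0_mem) (hint h0_mem hb_mem),
    ← intervalIntegral.integral_add_adjacent_intervals (hint h0_mem hm_mem) (hint hm_mem hb_mem)]
  have hleft : ∫ t in a..q 0, f t ≤ C * (q 0 - a) := hend le_rfl ha h0_mem.2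
  have hright : ∫ t in q m..b, f t ≤ C * (b - q m) := hend hm_mem.1 hb le_rfl
  linarith

lemma upperDarbouxStep_eq_of_mem_Ico (hq : Monotone q) {i : ℕ} (hi : i < m)
    (ht : t ∈ Ico (q i) (q (i + 1))) :
    upperDarbouxStep f q m t = sSup (f '' Icc (q i) (q (i + 1))) := by
  rw [upperDarbouxStep, Finset.sum_eq_single_of_mem i (Finset.mem_range.2 hi), indicator_of_mem ht]
  intro j _ hji
  exact indicator_of_notMem (hq.pairwise_disjoint_on_Ico_succ hji |>.notMem_of_mem_right ht) _

lemma upperDarbouxStep_eq_zero (hq : Monotone q) (ht : t ∉ Ico (q 0) (q m)) :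
    upperDarbouxStep f q m t = 0 :=
  Finset.sum_eq_zero fun i hi => indicator_of_notMem
    (fun hti => ht (Ico_subset_Ico (hq i.zero_le) (hq (Finset.mem_range.1 hi)) hti)) _

lemma abs_upperDarbouxStep_le (hq : Monotone q) (ha : a ≤ q 0) (hb : q m ≤ b)
    (hf : ∀ t ∈ Icc a b, |f t| ≤ C) :
    |upperDarbouxStep f q m t| ≤ (Icc a b).indicator (fun _ => C) t := by
  by_cases htab : t ∈ Icc a b
  · rw [indicator_of_mem htab]
    by_cases ht : t ∈ Ico (q 0) (q m)
    · obtain ⟨i, hi, hti⟩ := exists_lt_mem_Ico_succ ht.1 ht.2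
      rw [upperDarbouxStep_eq_of_mem_Ico hq hi hti]
      exact abs_sSup_image_le ⟨q i, hq i.le_succ |> left_mem_Icc.2⟩
        fun s hs => hf s ⟨ha.trans ((hq i.zero_le).trans hs.1), hs.2.trans ((hq hi).trans hb)⟩
    · rw [upperDarbouxStep_eq_zero hq ht, abs_zero]
      exact (abs_nonneg _).trans (hf t htab)
  · have ht : t ∉ Ico (q 0) (q m) := fun ht => htab ⟨ha.trans ht.1, ht.2.le.trans hb⟩
    rw [indicator_of_notMem htab, upperDarbouxStep_eq_zero hq ht, abs_zero]

lemma integrable_upperDarbouxStep : Integrable (upperDarbouxStep f q m) :=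
  integrable_finsetSum _ fun _ _ =>
    (integrable_indicator_iff measurableSet_Ico).2 (integrableOn_const measure_Ico_lt_top.ne)

lemma integral_upperDarbouxStep (hq : Monotone q) :
    ∫ t, upperDarbouxStep f q m t = upperDarbouxSum f q m := by
  unfold upperDarbouxStep
  rw [integral_finsetSum _ fun _ _ =>
    (integrable_indicator_iff measurableSet_Ico).2 (integrableOn_const measure_Ico_lt_top.ne)]
  refine Finset.sum_congr rfl fun i _ => ?_
  rw [integral_indicator_const _ measurableSet_Ico, Real.volume_real_Ico_of_le (hq i.le_succ),
    smul_eq_mul]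

end Darboux

/-- The `m`-th partition `q m 0 < ⋯ < q m m` has `m` pieces; its end points are only required to
approach `a` and `b`, so that all of them can be chosen to be continuity points. -/
structure IsPartitionSeq (a b : ℝ) (q : ℕ → ℕ → ℝ) : Prop where
  strictMono (m : ℕ) : StrictMono (q m)
  le_first (m : ℕ) : a ≤ q m 0
  last_le (m : ℕ) : q m m ≤ b
  tendsto_first : Tendsto (fun m => q m 0) atTop (𝓝 a)
  tendsto_last : Tendsto (fun m => q m m) atTop (𝓝 b)
  mesh_lt : ∀ ε > 0, ∀ᶠ m in atTop, ∀ i < m, q m (i + 1) - q m i < ε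

namespace IsPartitionSeq

variable {q : ℕ → ℕ → ℝ} {a b : ℝ} {f : ℝ → ℝ} {C t : ℝ}

lemma mem_Icc (hq : IsPartitionSeq a b q) {m i : ℕ} (hi : i ≤ m) : q m i ∈ Icc a b :=
  ⟨(hq.le_first m).trans ((hq.strictMono m).monotone i.zero_le),
    ((hq.strictMono m).monotone hi).trans (hq.last_le m)⟩

lemma tendsto_upperDarbouxStep (hq : IsPartitionSeq a b q) (ht : t ∈ Ioo a b)
    (hf : ContinuousAt f t) :
    Tendsto (fun m => upperDarbouxStep f (q m) m t) atTop (𝓝 (f t)) := by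
  refine Metric.tendsto_nhds.2 fun ε hε => ?_
  obtain ⟨δ, hδ, hfδ⟩ := Metric.continuousAt_iff.1 hf (ε / 2) (half_pos hε)
  filter_upwards [hq.tendsto_first.eventually_lt_const ht.1,
    hq.tendsto_last.eventually_const_lt ht.2, hq.mesh_lt δ hδ] with m h0 hm hmesh
  obtain ⟨i, hi, hti⟩ := exists_lt_mem_Ico_succ h0.le hm
  rw [upperDarbouxStep_eq_of_mem_Ico (hq.strictMono m).monotone hi hti, Real.dist_eq]
  refine (abs_sSup_image_Icc_sub_le (Ico_subset_Icc_self hti) fun s hs => ?_).trans_lt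
    (half_lt_self hε)
  have hst : dist s t < δ := by
    rw [Real.dist_eq, abs_lt]
    constructor <;> linarith [hs.1, hs.2, hti.1, hti.2, hmesh i hi]
  exact (hfδ hst).le

theorem tendsto_upperDarbouxSum (hq : IsPartitionSeq a b q) (hf : ∀ t ∈ Icc a b, |f t| ≤ C)
    (hcont : ∀ᵐ t, t ∈ Icc a b → ContinuousAt f t) :
    Tendsto (fun m => upperDarbouxSum f (q m) m) atTop (𝓝 (∫ t in a..b, f t)) := by
  have hab : a ≤ b := (hq.mem_Icc le_rfl (m := 0)).1.trans (hq.mem_Icc le_rfl (m := 0)).2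
  have hlim : ∀ᵐ t, Tendsto (fun m => upperDarbouxStep f (q m) m t) atTop
      (𝓝 ((Icc a b).indicator f t)) := by
    have hends : ∀ᵐ t, t ∉ ({a, b} : Set ℝ) :=
      measure_eq_zero_iff_ae_notMem.1 ((toFinite _).measure_zero volume)
    filter_upwards [hcont, hends] with t htc htab
    by_cases ht : t ∈ Icc a b
    · have ht' : t ∈ Ioo a b := ⟨lt_of_le_of_ne ht.1 (by rintro rfl; simp at htab),
        lt_of_le_of_ne ht.2 (by rintro rfl; simp at htab)⟩
      rw [indicator_of_mem ht]
      exact hq.tendsto_upperDarbouxStep ht' (htc ht)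
    · rw [indicator_of_notMem ht]
      refine tendsto_const_nhds.congr fun m => (upperDarbouxStep_eq_zero
        (hq.strictMono m).monotone fun htm => ht ?_).symm
      exact ⟨(hq.le_first m).trans htm.1, htm.2.le.trans (hq.last_le m)⟩
  have h := tendsto_integral_of_dominated_convergence _
    (fun m => integrable_upperDarbouxStep.aestronglyMeasurable)
    ((integrable_indicator_iff measurableSet_Icc).2 (integrableOn_const measure_Icc_lt_top.ne))
    (fun m => ae_of_all _ fun t => abs_upperDarbouxStep_le (hq.strictMono m).monotone
      (hq.le_first m) (hq.last_le m) hf) hlim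
  simpa only [integral_upperDarbouxStep (hq.strictMono _).monotone,
    integral_indicator measurableSet_Icc, integral_Icc_eq_integral_Ioc,
    ← intervalIntegral.integral_of_le hab] using h

end IsPartitionSeq

lemma exists_isPartitionSeq_forall_notMem {D : Set ℝ} (hD : D.Countable) {a b : ℝ} (hab : a < b) :
    ∃ q, IsPartitionSeq a b q ∧ ∀ m i, q m i ∉ D := by
  set h : ℕ → ℝ := fun m => (b - a) / (m + 1) with h_def
  have hpos : ∀ m, 0 < h m := fun m => div_pos (sub_pos.2 hab) m.cast_add_one_pos
  have hlim : Tendsto h atTop (𝓝 0) := by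
    have := (tendsto_one_div_add_atTop_nhds_zero_nat (𝕜 := ℝ)).const_mul (b - a)
    rw [mul_zero] at this
    exact this.congr fun m => mul_one_div _ _
  have hlast : ∀ m : ℕ, a + (m + 1) * h m = b := fun m => by
    simp only [h_def]; field_simp; ring
  have hex : ∀ m i : ℕ, ∃ c ∈ Dᶜ, c ∈ Ioo (a + i * h m) (a + (i + 1) * h m) := fun m i =>
    (hD.dense_compl ℝ).exists_between (by linarith [hpos m])
  choose q hqD hq using hex
  have hfirst : ∀ m, q m 0 ∈ Ioo a (a + h m) := fun m => by simpa using hq m 0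
  have hmesh : ∀ m i, q m (i + 1) - q m i < 2 * h m := fun m i => by
    have := (hq m (i + 1)).2; push_cast at this; linarith [(hq m i).1]
  refine ⟨q, ⟨fun m => strictMono_nat_of_lt_succ fun i => ?_, fun m => ?_, fun m => ?_, ?_, ?_, ?_⟩,
    hqD⟩
  · have := (hq m (i + 1)).1; push_cast at this; linarith [(hq m i).2]
  · exact (hfirst m).1.le
  · linarith [(hq m m).2, hlast m]
  · refine tendsto_of_tendsto_of_tendsto_of_le_of_le tendsto_const_nhds
      (by simpa using hlim.const_add a) (fun m => ?_) fun m => ?_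
    · exact (hfirst m).1.le
    · exact (hfirst m).2.le
  · refine tendsto_of_tendsto_of_tendsto_of_le_of_le (by simpa using hlim.const_sub b)
      tendsto_const_nhds (fun m => ?_) fun m => ?_
    · linarith [(hq m m).1, hlast m]
    · linarith [(hq m m).2, hlast m]
  · intro ε hε
    filter_upwards [(hlim.const_mul 2).eventually_lt_const (by simpa using hε)] with m hm i _
    exact (hmesh m i).trans hm

lemma sSup_image_neg (f : ℝ → ℝ) (s : Set ℝ) : sSup ((-f) '' s) = -sInf (f '' s) := by
  rw [← Real.sSup_neg, ← image_neg_eq_neg, image_image]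
  rfl

section Convergence

variable {xs : ℕ → ℝ → ℝ} {x : ℝ → ℝ} {a b C : ℝ}

theorem eventually_integral_lt_of_tendsto_sSup (hab : a < b)
    (hbdd : ∀ n, ∀ t ∈ Icc a b, |xs n t| ≤ C) (hxbdd : ∀ t ∈ Icc a b, |x t| ≤ C)
    (hint : ∀ n, IntervalIntegrable (xs n) volume a b)
    (hcount : {t ∈ Icc a b | ¬ContinuousAt x t}.Countable)
    (hsup : ∀ t₁ t₂ : ℝ, a ≤ t₁ → t₁ < t₂ → t₂ ≤ b → ContinuousAt x t₁ → ContinuousAt x t₂ →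
      Tendsto (fun n => sSup (xs n '' Icc t₁ t₂)) atTop (𝓝 (sSup (x '' Icc t₁ t₂))))
    {c : ℝ} (hc : ∫ t in a..b, x t < c) : ∀ᶠ n in atTop, ∫ t in a..b, xs n t < c := by
  obtain ⟨q, hq, hqD⟩ := exists_isPartitionSeq_forall_notMem hcount hab
  have hqcont : ∀ {m i}, i ≤ m → ContinuousAt x (q m i) := fun hi =>
    not_not.1 fun h => hqD _ _ ⟨hq.mem_Icc hi, h⟩
  have hcont : ∀ᵐ t, t ∈ Icc a b → ContinuousAt x t := by
    filter_upwards [measure_eq_zero_iff_ae_notMem.1 (hcount.measure_zero volume)] with t ht htab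
    exact not_not.1 fun h => ht ⟨htab, h⟩
  set B : (ℝ → ℝ) → ℕ → ℝ := fun f m =>
    C * (q m 0 - a) + upperDarbouxSum f (q m) m + C * (b - q m m)
  have hBx : Tendsto (B x) atTop (𝓝 (∫ t in a..b, x t)) := by
    simpa using ((tendsto_const_nhds.mul (hq.tendsto_first.sub_const a)).add
      (hq.tendsto_upperDarbouxSum hxbdd hcont)).add
      (tendsto_const_nhds.mul (hq.tendsto_last.const_sub b))
  obtain ⟨m, hm⟩ := (hBx.eventually_lt_const hc).exists
  have hBxs : Tendsto (fun n => B (xs n) m) atTop (𝓝 (B x m)) := by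
    refine (tendsto_const_nhds.add (tendsto_finsetSum _ fun i hi => ?_)).add tendsto_const_nhds
    have hi : i + 1 ≤ m := Finset.mem_range.1 hi
    exact (hsup _ _ (hq.mem_Icc (i.le_succ.trans hi)).1 (hq.strictMono m i.lt_succ_self)
      (hq.mem_Icc hi).2 (hqcont (i.le_succ.trans hi)) (hqcont hi)).const_mul _
  filter_upwards [hBxs.eventually_lt_const hm] with n hn
  exact (integral_le_add_upperDarbouxSum (hq.strictMono m).monotone (hq.le_first m)
    (hq.last_le m) (hbdd n) (hint n)).trans_lt hn

theorem eventually_lt_integral_of_tendsto_sInf (hab : a < b)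
    (hbdd : ∀ n, ∀ t ∈ Icc a b, |xs n t| ≤ C) (hxbdd : ∀ t ∈ Icc a b, |x t| ≤ C)
    (hint : ∀ n, IntervalIntegrable (xs n) volume a b)
    (hcount : {t ∈ Icc a b | ¬ContinuousAt x t}.Countable)
    (hinf : ∀ t₁ t₂ : ℝ, a ≤ t₁ → t₁ < t₂ → t₂ ≤ b → ContinuousAt x t₁ → ContinuousAt x t₂ →
      Tendsto (fun n => sInf (xs n '' Icc t₁ t₂)) atTop (𝓝 (sInf (x '' Icc t₁ t₂))))
    {c : ℝ} (hc : c < ∫ t in a..b, x t) : ∀ᶠ n in atTop, c < ∫ t in a..b, xs n t := by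
  have h := eventually_integral_lt_of_tendsto_sSup (xs := fun n => -xs n) (x := -x) (c := -c) hab
    (fun n t ht => (abs_neg (xs n t)).trans_le (hbdd n t ht))
    (fun t ht => (abs_neg (x t)).trans_le (hxbdd t ht)) (fun n => (hint n).neg)
    (by simpa only [continuousAt_neg_iff] using hcount)
    (fun t₁ t₂ h₁ h₁₂ h₂ hc₁ hc₂ => by
      simpa only [sSup_image_neg] using
        (hinf t₁ t₂ h₁ h₁₂ h₂ (continuousAt_neg_iff.1 hc₁) (continuousAt_neg_iff.1 hc₂)).neg)
    (by simpa only [Pi.neg_apply, intervalIntegral.integral_neg] using neg_lt_neg hc)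
  simpa only [Pi.neg_apply, intervalIntegral.integral_neg, neg_lt_neg_iff] using h

end Convergence

theorem stmt_10_general (xs : ℕ → ℝ → ℝ) (x : ℝ → ℝ) (C : ℝ)
    (hbdd : ∀ n, ∀ t ∈ Set.Icc (0 : ℝ) 1, |xs n t| ≤ C)
    (hxbdd : ∀ t ∈ Set.Icc (0 : ℝ) 1, |x t| ≤ C)
    (hint : ∀ n, IntervalIntegrable (xs n) MeasureTheory.volume 0 1)
    (hcount : Set.Countable {t ∈ Set.Icc (0 : ℝ) 1 | ¬ContinuousAt x t})
    (hsup : ∀ t₁ t₂ : ℝ, 0 ≤ t₁ → t₁ < t₂ → t₂ ≤ 1 →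
      ContinuousAt x t₁ → ContinuousAt x t₂ →
      Tendsto (fun n => sSup (xs n '' Set.Icc t₁ t₂)) atTop (nhds (sSup (x '' Set.Icc t₁ t₂))))
    (hinf : ∀ t₁ t₂ : ℝ, 0 ≤ t₁ → t₁ < t₂ → t₂ ≤ 1 →
      ContinuousAt x t₁ → ContinuousAt x t₂ →
      Tendsto (fun n => sInf (xs n '' Set.Icc t₁ t₂)) atTop (nhds (sInf (x '' Set.Icc t₁ t₂)))) :
    Tendsto (fun n => ∫ t in (0 : ℝ)..1, xs n t) atTop (nhds (∫ t in (0 : ℝ)..1, x t)) :=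
  tendsto_order.2
    ⟨fun _ hc => eventually_lt_integral_of_tendsto_sInf zero_lt_one hbdd hxbdd hint hcount hinf hc,
      fun _ hc => eventually_integral_lt_of_tendsto_sSup zero_lt_one hbdd hxbdd hint hcount hsup hc⟩

/-- Integration is continuous with respect to Skorokhod `M₂` convergence: if bounded
Riemann-integrable `x_n` converge to `x` (with at most countably many discontinuities) in
the sense that suprema and infima over subintervals with endpoints at continuity points of
`x` converge, then `∫_0^1 x_n → ∫_0^1 x`. -/
theorem stmt_10 (xs : ℕ → ℝ → ℝ) (x : ℝ → ℝ) (C : ℝ)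
    (hbdd : ∀ n, ∀ t ∈ Set.Icc (0 : ℝ) 1, |xs n t| ≤ C)
    (hxbdd : ∀ t ∈ Set.Icc (0 : ℝ) 1, |x t| ≤ C)
    (hint : ∀ n, IntervalIntegrable (xs n) MeasureTheory.volume 0 1)
    (hxint : IntervalIntegrable x MeasureTheory.volume 0 1)
    (hcount : Set.Countable {t ∈ Set.Icc (0 : ℝ) 1 | ¬ContinuousAt x t})
    (hsup : ∀ t₁ t₂ : ℝ, 0 ≤ t₁ → t₁ < t₂ → t₂ ≤ 1 →
      ContinuousAt x t₁ → ContinuousAt x t₂ →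
      Tendsto (fun n => sSup (xs n '' Set.Icc t₁ t₂)) atTop (nhds (sSup (x '' Set.Icc t₁ t₂))))
    (hinf : ∀ t₁ t₂ : ℝ, 0 ≤ t₁ → t₁ < t₂ → t₂ ≤ 1 →
      ContinuousAt x t₁ → ContinuousAt x t₂ →
      Tendsto (fun n => sInf (xs n '' Set.Icc t₁ t₂)) atTop (nhds (sInf (x '' Set.Icc t₁ t₂)))) :
    Tendsto (fun n => ∫ t in (0 : ℝ)..1, xs n t) atTop (nhds (∫ t in (0 : ℝ)..1, x t)) :=
  stmt_10_general xs x C hbdd hxbdd hint hcount hsup hinf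
end

section
/- Let (x_n) ⊂ ℝ be a sequence such that every subsequence has a further subsequence converging to x. Then x_n → x. Probabilistic version: if F̂_n(x) → F(x) in probability for every x ∈ ℝ with F continuous, then sup_x |F̂_n(x) − F(x)| → 0 in probability. -/
/-!
Pólya's argument, made quantitative. Since `F` is continuous with limits `0` and `1`, there are
points `a₁, …, a_{m-1}` with `F aᵢ = i / m`. Every `x` lies between two consecutive grid points
(or beyond the extreme ones, where the values `0` and `1` of both CDFs play the role of the
missing grid point), and monotonicity of `F̂_n(ω)` and `F` then bounds
`|F̂_n(ω) x - F x|` by the largest grid error plus the mesh `1 / m`. Hence the event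
`sup_x |F̂_n - F| > ε` is contained in the finite union of the events `|F̂_n aᵢ - F aᵢ| > ε / 2`
once `1 / m ≤ ε / 2`, and each of these has probability tending to `0`.
-/

open MeasureTheory Filter Topology

lemma abs_sub_le_of_bracket {g f gl gu fl fu δ η : ℝ} (hgl : gl ≤ g) (hgu : g ≤ gu)
    (hfl : fl ≤ f) (hfu : f ≤ fu) (hl : |gl - fl| ≤ δ) (hu : |gu - fu| ≤ δ)
    (hη : fu - fl ≤ η) : |g - f| ≤ δ + η := by
  rw [abs_le] at hl hu ⊢
  constructor <;> linarith

lemma exists_grid_bracket (a : ℕ → ℝ) {m : ℕ} (hm : 0 < m) (x : ℝ) :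
    ∃ j, j < m ∧ (0 < j → a j ≤ x) ∧ (j + 1 < m → x < a (j + 1)) := by
  classical
  have hP : ∃ j, j + 1 < m → x < a (j + 1) := ⟨m - 1, fun h => by omega⟩
  refine ⟨Nat.find hP, ?_, fun hj => ?_, Nat.find_spec hP⟩
  · have := Nat.find_min' hP (show m - 1 + 1 < m → x < a (m - 1 + 1) from fun h => by omega)
    omega
  · have hmin := Nat.find_min hP (Nat.sub_one_lt_of_lt hj)
    rw [Nat.sub_add_cancel hj] at hmin
    exact not_lt.mp (Classical.not_imp.mp hmin).2

lemma abs_sub_le_of_grid {G F : ℝ → ℝ} (hG : Monotone G) (hG0 : ∀ x, 0 ≤ G x)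
    (hG1 : ∀ x, G x ≤ 1) (hF : Monotone F) (hF0 : ∀ x, 0 ≤ F x) (hF1 : ∀ x, F x ≤ 1)
    {m : ℕ} (hm : 0 < m) {δ : ℝ} (hδ : 0 ≤ δ) {a : ℕ → ℝ}
    (ha : ∀ i, 0 < i → i < m → F (a i) = i / m)
    (hd : ∀ i, 0 < i → i < m → |G (a i) - F (a i)| ≤ δ) (x : ℝ) :
    |G x - F x| ≤ δ + 1 / m := by
  obtain ⟨j, hjm, hjl, hju⟩ := exists_grid_bracket a hm x
  have lower : ∃ gl, gl ≤ G x ∧ (j : ℝ) / m ≤ F x ∧ |gl - j / m| ≤ δ := by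
    rcases Nat.eq_zero_or_pos j with rfl | hj
    · exact ⟨0, hG0 x, by simpa using hF0 x, by simpa using hδ⟩
    · refine ⟨G (a j), hG (hjl hj), ha j hj hjm ▸ hF (hjl hj), ?_⟩
      simpa [ha j hj hjm] using hd j hj hjm
  have upper : ∃ gu, G x ≤ gu ∧ F x ≤ ((j + 1 : ℕ) : ℝ) / m ∧
      |gu - ((j + 1 : ℕ) : ℝ) / m| ≤ δ := by
    by_cases hj : j + 1 < m
    · refine ⟨G (a (j + 1)), hG (hju hj).le, ha _ j.succ_pos hj ▸ hF (hju hj).le, ?_⟩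
      simpa [ha _ j.succ_pos hj] using hd _ j.succ_pos hj
    · have hmj : ((j + 1 : ℕ) : ℝ) / m = 1 := by
        rw [show j + 1 = m by omega, div_self (by positivity)]
      exact ⟨1, hG1 x, hmj ▸ hF1 x, by rwa [hmj, sub_self, abs_zero]⟩
  obtain ⟨gl, hgl, hfl, hl⟩ := lower
  obtain ⟨gu, hgu, hfu, hu⟩ := upper
  refine abs_sub_le_of_bracket hgl hgu hfl hfu hl hu (le_of_eq ?_)
  push_cast
  ring

lemma exists_quantile_grid {F : ℝ → ℝ} (hF : Continuous F) (hFbot : Tendsto F atBot (𝓝 0))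
    (hFtop : Tendsto F atTop (𝓝 1)) (m : ℕ) :
    ∃ a : ℕ → ℝ, ∀ i, 0 < i → i < m → F (a i) = i / m := by
  have hrange : ∀ i, ∃ x, 0 < i → i < m → F x = i / m := by
    intro i
    by_cases hi : 0 < i ∧ i < m
    · have hpos : (0 : ℝ) < i / m :=
        div_pos (by exact_mod_cast hi.1) (by exact_mod_cast hi.1.trans hi.2)
      have hlt : (i : ℝ) / m < 1 := by
        rw [div_lt_one (by exact_mod_cast hi.1.trans hi.2)]
        exact_mod_cast hi.2
      obtain ⟨x, hx⟩ := mem_range_of_exists_le_of_exists_ge hF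
        ((hFbot.eventually (eventually_lt_nhds hpos)).exists.imp fun _ => le_of_lt)
        ((hFtop.eventually (eventually_gt_nhds hlt)).exists.imp fun _ => le_of_lt)
      exact ⟨x, fun _ _ => hx⟩
    · exact ⟨0, fun h1 h2 => absurd ⟨h1, h2⟩ hi⟩
  choose a ha using hrange
  exact ⟨a, ha⟩

lemma tendsto_measure_zero_of_subset_biUnion {Ω ι : Type*} [MeasurableSpace Ω] {μ : Measure Ω}
    {l : Filter ℕ} (s : Finset ι) {E : ℕ → Set Ω} {A : ι → ℕ → Set Ω}
    (hsub : ∀ n, E n ⊆ ⋃ i ∈ s, A i n) (hA : ∀ i ∈ s, Tendsto (fun n => μ (A i n)) l (𝓝 0)) :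
    Tendsto (fun n => μ (E n)) l (𝓝 0) := by
  have hsum : Tendsto (fun n => ∑ i ∈ s, μ (A i n)) l (𝓝 0) := by
    simpa using tendsto_finsetSum s hA
  exact tendsto_of_tendsto_of_tendsto_of_le_of_le tendsto_const_nhds hsum (fun _ => zero_le)
    fun n => (measure_mono (hsub n)).trans (measure_biUnion_finset_le _ _)

theorem stmt_18_general {Ω : Type*} [MeasurableSpace Ω] (μ : Measure Ω)
    (Fh : ℕ → Ω → ℝ → ℝ) (F : ℝ → ℝ)
    (hmono : ∀ n ω, Monotone (Fh n ω))
    (hbdd : ∀ n ω x, Fh n ω x ∈ Set.Icc (0 : ℝ) 1)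
    (hFmono : Monotone F) (hFcont : Continuous F)
    (hFbot : Tendsto F atBot (nhds 0)) (hFtop : Tendsto F atTop (nhds 1))
    (hconv : ∀ x : ℝ, ∀ ε : ℝ, 0 < ε →
      Tendsto (fun n => μ {ω | ε < |Fh n ω x - F x|}) atTop (nhds 0)) :
    ∀ ε : ℝ, 0 < ε →
      Tendsto (fun n => μ {ω | ε < ⨆ x : ℝ, |Fh n ω x - F x|}) atTop (nhds 0) := by
  intro ε hε
  obtain ⟨k, hk⟩ := exists_nat_one_div_lt (half_pos hε)
  set m := k + 1
  have hm : 0 < m := k.succ_pos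
  have hmesh : 1 / (m : ℝ) < ε / 2 := by simpa [m] using hk
  obtain ⟨a, ha⟩ := exists_quantile_grid hFcont hFbot hFtop m
  refine tendsto_measure_zero_of_subset_biUnion (Finset.Ioo 0 m)
    (fun n ω hω => ?_) fun i _ => hconv (a i) (ε / 2) (half_pos hε)
  by_contra hnot
  simp only [Set.mem_iUnion, Set.mem_ofPred_eq, Finset.mem_Ioo, not_exists, not_lt] at hnot
  have hsup : ⨆ x, |Fh n ω x - F x| ≤ ε / 2 + 1 / m :=
    ciSup_le <| abs_sub_le_of_grid (hmono n ω) (fun x => (hbdd n ω x).1)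
      (fun x => (hbdd n ω x).2) hFmono (hFmono.le_of_tendsto hFbot) (hFmono.ge_of_tendsto hFtop)
      hm (half_pos hε).le ha fun i hi0 him => hnot i ⟨hi0, him⟩
  exact (lt_irrefl ε) (hω.trans_le (by linarith))

/-- Probabilistic Pólya theorem via the subsequence principle: if `F̂_n` are random CDFs,
`F` is a deterministic continuous CDF, and `F̂_n(x) → F(x)` in probability for every `x`,
then `sup_x |F̂_n(x) − F(x)| → 0` in probability. -/
theorem stmt_18 {Ω : Type*} [MeasurableSpace Ω] (μ : Measure Ω) [IsProbabilityMeasure μ]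
    (Fh : ℕ → Ω → ℝ → ℝ) (F : ℝ → ℝ)
    (hmeas : ∀ n x, Measurable (fun ω => Fh n ω x))
    (hmono : ∀ n ω, Monotone (Fh n ω))
    (hbdd : ∀ n ω x, Fh n ω x ∈ Set.Icc (0 : ℝ) 1)
    (hFmono : Monotone F) (hFcont : Continuous F)
    (hFbot : Tendsto F atBot (nhds 0)) (hFtop : Tendsto F atTop (nhds 1))
    (hconv : ∀ x : ℝ, ∀ ε : ℝ, 0 < ε →
      Tendsto (fun n => μ {ω | ε < |Fh n ω x - F x|}) atTop (nhds 0)) :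
    ∀ ε : ℝ, 0 < ε →
      Tendsto (fun n => μ {ω | ε < ⨆ x : ℝ, |Fh n ω x - F x|}) atTop (nhds 0) :=
  stmt_18_general μ Fh F hmono hbdd hFmono hFcont hFbot hFtop hconv
end
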